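/- Minimization principle: let f : ℝ^d × ℝ^d → (0,∞) be measurable with ϱ(x) = ∫ f(x,v) dv ∈ (0,∞) and ϱ(x) u(x) = ∫ v f(x,v) dv for a.e. x, and suppose all integrals below are finite. Then ∫ ϱ |u|²/2 + ϱ log ϱ dx ≤ ∫∫ f |v|²/2 + f log f dv dx + (d/2) log(2π) ∫ ϱ dx. -/

import Mathlib

/-!
For fixed `x`, compare `f x ·` with the Maxwellian `M` of the same mass `ρ x` and mean velocity
`u x`. Gibbs' inequality `f log M + f - M ≤ f log f` holds pointwise; since `log M` is a quadratic
polynomial in `v`, integrating it in `v` only involves the mass and first moment of `f x ·`, and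
gives the fluid entropy density at `x` as a lower bound for the kinetic one. Integrate in `x`.
-/

open MeasureTheory Real Module

namespace Real

theorem mul_log_add_sub_le_mul_log {a b : ℝ} (ha : 0 < a) (hb : 0 < b) :
    a * log b + a - b ≤ a * log a := by
  have h := mul_le_mul_of_nonneg_left (log_le_sub_one_of_pos (div_pos hb ha)) ha.le
  rw [log_div hb.ne' ha.ne', mul_sub, mul_sub, mul_div_cancel₀ _ ha.ne'] at h
  linarith

end Real

section Maxwellian

variable {V : Type*} [NormedAddCommGroup V] [InnerProductSpace ℝ V]

noncomputable def maxwellian (R : ℝ) (u v : V) : ℝ :=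
  R * (2 * π) ^ (-(finrank ℝ V : ℝ) / 2) * rexp (-(1 / 2) * ‖v - u‖ ^ 2)

theorem maxwellian_pos {R : ℝ} (hR : 0 < R) (u v : V) : 0 < maxwellian R u v := by
  unfold maxwellian
  positivity

theorem log_maxwellian {R : ℝ} (hR : 0 < R) (u v : V) :
    log (maxwellian R u v) =
      log R - (finrank ℝ V : ℝ) / 2 * log (2 * π) - ‖v - u‖ ^ 2 / 2 := by
  rw [maxwellian, log_mul (by positivity) (exp_ne_zero _), log_mul hR.ne' (by positivity),
    log_rpow (by positivity), log_exp]
  ring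

variable [FiniteDimensional ℝ V] [MeasurableSpace V] [BorelSpace V]

theorem integrable_maxwellian (R : ℝ) (u : V) : Integrable (maxwellian R u) := by
  have hgauss : Integrable fun v : V => rexp (-(1 / 2) * ‖v‖ ^ 2) := by
    refine (GaussianFourier.integrable_cexp_neg_mul_sq_norm_add (V := V)
      (b := (1 / 2 : ℂ)) (by norm_num) 0 0).norm.congr (ae_of_all _ fun v => ?_)
    dsimp only
    rw [Complex.norm_exp]
    norm_num [← Complex.ofReal_pow]
  exact (hgauss.comp_sub_right u).const_mul _

theorem integral_maxwellian (R : ℝ) (u : V) : ∫ v, maxwellian R u v = R := by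
  have hcancel : (2 * π) ^ (-(finrank ℝ V : ℝ) / 2) * (2 * π) ^ ((finrank ℝ V : ℝ) / 2) = 1 := by
    rw [← rpow_add (by positivity), neg_div, neg_add_cancel, rpow_zero]
  simp only [maxwellian]
  rw [integral_const_mul, integral_sub_right_eq_self (fun v => rexp (-(1 / 2) * ‖v‖ ^ 2)) u,
    GaussianFourier.integral_rexp_neg_mul_sq_norm (by norm_num), div_div_eq_mul_div, div_one,
    mul_comm π, mul_assoc, hcancel, mul_one]

end Maxwellian

section FirstMoment

variable {V : Type*} [NormedAddCommGroup V] [InnerProductSpace ℝ V] [CompleteSpace V]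
  [MeasurableSpace V] {μ : Measure V}

theorem integrable_and_integral_mul_inner_of_smul_eq_integral {g : V → ℝ} {R : ℝ} {u : V}
    (hR : R ≠ 0) (hu : R • u = ∫ v, g v • v ∂μ) :
    Integrable (fun v => g v * inner ℝ v u) μ ∧ ∫ v, g v * inner ℝ v u ∂μ = R * ‖u‖ ^ 2 := by
  have hinner : ∀ v, g v * inner ℝ v u = innerSL ℝ u (g v • v) := fun v => by
    rw [innerSL_apply_apply, real_inner_smul_right, real_inner_comm]
  by_cases hmoment : Integrable (fun v => g v • v) μ
  · simp_rw [hinner]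
    refine ⟨(innerSL ℝ u).integrable_comp hmoment, ?_⟩
    rw [ContinuousLinearMap.integral_comp_comm _ hmoment, ← hu, innerSL_apply_apply,
      real_inner_smul_right, real_inner_self_eq_norm_sq]
  · -- a non-integrable first moment has junk integral `0`, which forces `u = 0`
    rw [integral_undef hmoment, smul_eq_zero, or_iff_right hR] at hu
    simp [hu]

end FirstMoment

section Entropy

variable {V : Type*} [NormedAddCommGroup V] [InnerProductSpace ℝ V] [FiniteDimensional ℝ V]
  [MeasurableSpace V] [BorelSpace V]

theorem mul_norm_sq_div_two_add_mul_log_le_integral {g : V → ℝ} {R : ℝ} {u : V}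
    (hg : ∀ v, 0 < g v) (hR : 0 < R) (hmass : R = ∫ v, g v) (hu : R • u = ∫ v, g v • v)
    (hent : Integrable fun v => g v * ‖v‖ ^ 2 / 2 + g v * log (g v)) :
    R * ‖u‖ ^ 2 / 2 + R * log R ≤
      (∫ v, (g v * ‖v‖ ^ 2 / 2 + g v * log (g v))) +
        (finrank ℝ V : ℝ) / 2 * log (2 * π) * R := by
  have hgint : Integrable g := .of_integral_ne_zero (hmass ▸ hR.ne')
  obtain ⟨hinner_int, hinner⟩ := integrable_and_integral_mul_inner_of_smul_eq_integral hR.ne' hu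
  set C := log R - (finrank ℝ V : ℝ) / 2 * log (2 * π) - ‖u‖ ^ 2 / 2 + 1
  have hlin_int : Integrable fun v => g v * C + g v * inner ℝ v u :=
    (hgint.mul_const C).add hinner_int
  -- Gibbs against the Maxwellian, with `log M` expanded so that only moments of `g` remain
  have hgibbs : ∀ v, g v * C + g v * inner ℝ v u - maxwellian R u v ≤
      g v * ‖v‖ ^ 2 / 2 + g v * log (g v) := fun v => by
    have h := mul_log_add_sub_le_mul_log (hg v) (maxwellian_pos hR u v)
    rw [log_maxwellian hR, norm_sub_sq_real] at h
    linear_combination h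
  have hlower : ∫ v, (g v * C + g v * inner ℝ v u - maxwellian R u v) =
      R * C + R * ‖u‖ ^ 2 - R := by
    rw [integral_sub hlin_int (integrable_maxwellian R u), integral_add (hgint.mul_const C)
      hinner_int, integral_mul_const, ← hmass, hinner, integral_maxwellian]
  have hmono : ∫ v, (g v * C + g v * inner ℝ v u - maxwellian R u v) ≤
      ∫ v, (g v * ‖v‖ ^ 2 / 2 + g v * log (g v)) :=
    integral_mono (hlin_int.sub (integrable_maxwellian R u)) hent hgibbs
  rw [hlower] at hmono
  linear_combination hmono

end Entropy

theorem entropy_minimization_principle (d : ℕ)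
    (f : EuclideanSpace ℝ (Fin d) → EuclideanSpace ℝ (Fin d) → ℝ)
    (ρ : EuclideanSpace ℝ (Fin d) → ℝ)
    (u : EuclideanSpace ℝ (Fin d) → EuclideanSpace ℝ (Fin d))
    (hf : ∀ x v, 0 < f x v)
    (hρ : ∀ x, ρ x = ∫ v : EuclideanSpace ℝ (Fin d), f x v)
    (hρpos : ∀ x, 0 < ρ x)
    (hu : ∀ x, ρ x • u x = ∫ v : EuclideanSpace ℝ (Fin d), f x v • v)
    (hE : Integrable (fun x : EuclideanSpace ℝ (Fin d) =>
      ρ x * ‖u x‖ ^ 2 / 2 + ρ x * log (ρ x)))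
    (hF : Integrable (fun p : EuclideanSpace ℝ (Fin d) × EuclideanSpace ℝ (Fin d) =>
      f p.1 p.2 * ‖p.2‖ ^ 2 / 2 + f p.1 p.2 * log (f p.1 p.2)))
    (hρint : Integrable ρ) :
    (∫ x : EuclideanSpace ℝ (Fin d), (ρ x * ‖u x‖ ^ 2 / 2 + ρ x * log (ρ x))) ≤
      (∫ p : EuclideanSpace ℝ (Fin d) × EuclideanSpace ℝ (Fin d),
        (f p.1 p.2 * ‖p.2‖ ^ 2 / 2 + f p.1 p.2 * log (f p.1 p.2))) +
        ((d : ℝ) / 2) * log (2 * π) * ∫ x : EuclideanSpace ℝ (Fin d), ρ x := by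
  rw [Measure.volume_eq_prod] at hF ⊢
  have hpointwise : ∀ᵐ x, ρ x * ‖u x‖ ^ 2 / 2 + ρ x * log (ρ x) ≤
      (∫ v, (f x v * ‖v‖ ^ 2 / 2 + f x v * log (f x v))) + (d : ℝ) / 2 * log (2 * π) * ρ x := by
    filter_upwards [hF.prod_right_ae] with x hx
    simpa only [finrank_euclideanSpace_fin] using
      mul_norm_sq_div_two_add_mul_log_le_integral (hf x) (hρpos x) (hρ x) (hu x) hx
  have hbound : ∫ x, (ρ x * ‖u x‖ ^ 2 / 2 + ρ x * log (ρ x)) ≤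
      ∫ x, ((∫ v, (f x v * ‖v‖ ^ 2 / 2 + f x v * log (f x v))) +
        (d : ℝ) / 2 * log (2 * π) * ρ x) :=
    integral_mono_ae hE (hF.integral_prod_left.add (hρint.const_mul _)) hpointwise
  rwa [integral_add hF.integral_prod_left (hρint.const_mul _), integral_const_mul,
    ← integral_prod _ hF] at hbound
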